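/- Differentiability in quadratic mean implies the score has zero mean: if ∫ ((√p_t − √p₀)/t − (1/2) g √p₀)² dz → 0 as t → 0, where each p_t is a probability density and g ∈ L²(p₀), then ∫ g p₀ dz = 0. -/

import Mathlib

/-!
Put `ξ_t = √p_t ∈ L²(μ)`. Every `ξ_t` is a unit vector, and differentiability in quadratic mean
says that `(ξ_t - ξ_0) / t → g ξ_0 / 2` in `L²(μ)`. For unit vectors
`2 ⟪ξ_0, ξ_t - ξ_0⟫ = -‖ξ_t - ξ_0‖² = O(t²)`, so dividing by `t` and letting `t → 0⁺` gives
`0 = ⟪ξ_0, g ξ_0 / 2⟫ = (1/2) ∫ g p_0 dμ`.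
-/

open MeasureTheory Filter Topology RealInnerProductSpace

section InnerProductSpace

variable {E : Type*} [NormedAddCommGroup E] [InnerProductSpace ℝ E]

theorem inner_sub_eq_neg_half_norm_sub_sq {a b : E} (h : ‖a‖ = ‖b‖) :
    ⟪b, a - b⟫ = -(‖a - b‖ ^ 2 / 2) := by
  rw [inner_sub_right, norm_sub_sq_real, h, real_inner_self_eq_norm_sq, real_inner_comm]
  ring

theorem inner_eq_zero_of_tendsto_slope_of_norm_eq {F : ℝ → E} {H : E}
    (hF : ∀ t, ‖F t‖ = ‖F 0‖)
    (hH : Tendsto (fun t => t⁻¹ • (F t - F 0)) (𝓝[>] 0) (𝓝 H)) : ⟪F 0, H⟫ = 0 := by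
  have key : ∀ t ≠ 0, ⟪F 0, t⁻¹ • (F t - F 0)⟫ = -(t / 2) * ‖t⁻¹ • (F t - F 0)‖ ^ 2 := by
    intro t ht
    rw [real_inner_smul_right, inner_sub_eq_neg_half_norm_sub_sq (hF t), norm_smul, mul_pow,
      Real.norm_eq_abs, sq_abs]
    field_simp
  have hlim : Tendsto (fun t : ℝ => -(t / 2) * ‖t⁻¹ • (F t - F 0)‖ ^ 2) (𝓝[>] 0)
      (𝓝 (-((0 : ℝ) / 2) * ‖H‖ ^ 2)) :=
    ((tendsto_nhdsWithin_of_tendsto_nhds tendsto_id).div_const 2).neg.mul (hH.norm.pow 2)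
  rw [zero_div, neg_zero, zero_mul] at hlim
  refine tendsto_nhds_unique ((tendsto_const_nhds.inner hH).congr' ?_) hlim
  filter_upwards [self_mem_nhdsWithin] with t ht using key t (ne_of_gt ht)

end InnerProductSpace

namespace MeasureTheory

variable {α : Type*} [MeasurableSpace α] {μ : Measure α}

theorem MemLp.inner_toLp_toLp {𝕜 E : Type*} [RCLike 𝕜] [NormedAddCommGroup E]
    [InnerProductSpace 𝕜 E] {f g : α → E} (hf : MemLp f 2 μ) (hg : MemLp g 2 μ) :
    inner 𝕜 (hf.toLp f) (hg.toLp g) = ∫ x, inner 𝕜 (f x) (g x) ∂μ := by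
  refine integral_congr_ae ?_
  filter_upwards [hf.coeFn_toLp, hg.coeFn_toLp] with x hfx hgx
  rw [hfx, hgx]

section Real

variable {E : Type*} [NormedAddCommGroup E] [InnerProductSpace ℝ E]

theorem MemLp.norm_toLp_sq {f : α → E} (hf : MemLp f 2 μ) :
    ‖hf.toLp f‖ ^ 2 = ∫ x, ‖f x‖ ^ 2 ∂μ := by
  simp_rw [← real_inner_self_eq_norm_sq, hf.inner_toLp_toLp]

theorem MemLp.tendsto_toLp_of_tendsto_integral_norm_sub_sq {ι : Type*} {l : Filter ι}
    {f : ι → α → E} {h : α → E} (hf : ∀ i, MemLp (f i) 2 μ) (hh : MemLp h 2 μ)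
    (hlim : Tendsto (fun i => ∫ x, ‖f i x - h x‖ ^ 2 ∂μ) l (𝓝 0)) :
    Tendsto (fun i => (hf i).toLp (f i)) l (𝓝 (hh.toLp h)) := by
  rw [tendsto_iff_norm_sub_tendsto_zero]
  have hnorm : ∀ i, ‖(hf i).toLp (f i) - hh.toLp h‖ = √(∫ x, ‖f i x - h x‖ ^ 2 ∂μ) := by
    intro i
    rw [← MemLp.toLp_sub, ← Real.sqrt_sq (norm_nonneg _), ((hf i).sub hh).norm_toLp_sq]
    rfl
  simpa only [hnorm, Real.sqrt_zero] using hlim.sqrt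

end Real

theorem Integrable.memLp_two_sqrt {f : α → ℝ} (hf : Integrable f μ) (hf0 : 0 ≤ᵐ[μ] f) :
    MemLp (fun x => √(f x)) 2 μ := by
  rw [memLp_two_iff_integrable_sq (Real.continuous_sqrt.comp_aestronglyMeasurable hf.1)]
  refine hf.congr ?_
  filter_upwards [hf0] with x hx using (Real.sq_sqrt hx).symm

theorem Integrable.norm_toLp_sqrt_sq {f : α → ℝ} (hf : Integrable f μ) (hf0 : 0 ≤ᵐ[μ] f) :
    ‖(hf.memLp_two_sqrt hf0).toLp _‖ ^ 2 = ∫ x, f x ∂μ := by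
  rw [MemLp.norm_toLp_sq]
  refine integral_congr_ae ?_
  filter_upwards [hf0] with x hx
  rw [Real.norm_eq_abs, sq_abs, Real.sq_sqrt hx]

theorem memLp_two_mul_sqrt {f g : α → ℝ} (hg : AEStronglyMeasurable g μ)
    (hf : AEStronglyMeasurable f μ) (hf0 : 0 ≤ᵐ[μ] f)
    (hgf : Integrable (fun x => g x ^ 2 * f x) μ) :
    MemLp (fun x => g x * √(f x)) 2 μ := by
  refine (memLp_two_iff_integrable_sq
    (hg.mul (Real.continuous_sqrt.comp_aestronglyMeasurable hf))).2 (hgf.congr ?_)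
  filter_upwards [hf0] with x hx
  rw [Pi.mul_apply, mul_pow, Real.sq_sqrt hx]

end MeasureTheory

theorem score_zero_mean_of_dqm_general {Ω : Type*} [MeasurableSpace Ω] (μ : Measure Ω)
    (p : ℝ → Ω → ℝ) (g : Ω → ℝ)
    (hgmeas : Measurable g)
    (hnonneg : ∀ t x, 0 ≤ p t x)
    (hdens : ∀ t, ∫ x, p t x ∂μ = 1)
    (hint : ∀ t, Integrable (p t) μ)
    (hg2 : Integrable (fun x => g x ^ 2 * p 0 x) μ)
    (hDQM : Tendsto
      (fun t => ∫ x, ((Real.sqrt (p t x) - Real.sqrt (p 0 x)) / t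
          - (1 / 2) * g x * Real.sqrt (p 0 x)) ^ 2 ∂μ)
      (nhdsWithin 0 (Set.Ioi 0)) (nhds 0)) :
    ∫ x, g x * p 0 x ∂μ = 0 := by
  have hp0 : ∀ t, 0 ≤ᵐ[μ] p t := fun t => ae_of_all _ (hnonneg t)
  have hs : ∀ t, MemLp (fun x => √(p t x)) 2 μ := fun t => (hint t).memLp_two_sqrt (hp0 t)
  have hscore : MemLp (fun x => 1 / 2 * (g x * √(p 0 x))) 2 μ :=
    (memLp_two_mul_sqrt hgmeas.aestronglyMeasurable (hint 0).1 (hp0 0) hg2).const_mul _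
  set F : ℝ → Lp ℝ 2 μ := fun t => (hs t).toLp _
  have hF : ∀ t, ‖F t‖ = ‖F 0‖ := fun t =>
    (pow_left_inj₀ (norm_nonneg _) (norm_nonneg _) two_ne_zero).1 <| by
      rw [(hint t).norm_toLp_sqrt_sq (hp0 t), (hint 0).norm_toLp_sqrt_sq (hp0 0), hdens, hdens]
  have hlim : Tendsto (fun t => t⁻¹ • (F t - F 0)) (𝓝[>] 0) (𝓝 (hscore.toLp _)) := by
    refine MemLp.tendsto_toLp_of_tendsto_integral_norm_sub_sq
      (fun t => ((hs t).sub (hs 0)).const_smul t⁻¹) hscore ?_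
    simpa only [Pi.smul_apply, Pi.sub_apply, smul_eq_mul, Real.norm_eq_abs, sq_abs,
      div_eq_inv_mul, mul_assoc] using hDQM
  have horth := inner_eq_zero_of_tendsto_slope_of_norm_eq hF hlim
  rw [MemLp.inner_toLp_toLp] at horth
  calc ∫ x, g x * p 0 x ∂μ = 2 * ∫ x, ⟪√(p 0 x), 1 / 2 * (g x * √(p 0 x))⟫ ∂μ := by
        rw [← integral_const_mul]
        refine integral_congr_ae (ae_of_all _ fun x => ?_)
        simp only [RCLike.inner_apply, conj_trivial]
        linear_combination -g x * Real.sq_sqrt (hnonneg 0 x)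
    _ = 0 := by rw [horth, mul_zero]

/-- Differentiability in quadratic mean implies the score has zero mean: if
`∫ ((√p_t − √p₀)/t − (1/2) g √p₀)² dμ → 0` as `t → 0⁺`, where each `p_t` is a probability
density and `∫ g² p₀ dμ < ∞`, then `∫ g p₀ dμ = 0`. -/
theorem score_zero_mean_of_dqm {Ω : Type*} [MeasurableSpace Ω] (μ : Measure Ω)
    (p : ℝ → Ω → ℝ) (g : Ω → ℝ)
    (hmeas : ∀ t, Measurable (p t)) (hgmeas : Measurable g)
    (hnonneg : ∀ t x, 0 ≤ p t x)
    (hdens : ∀ t, ∫ x, p t x ∂μ = 1)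
    (hint : ∀ t, Integrable (p t) μ)
    (hg2 : Integrable (fun x => g x ^ 2 * p 0 x) μ)
    (hDQM : Tendsto
      (fun t => ∫ x, ((Real.sqrt (p t x) - Real.sqrt (p 0 x)) / t
          - (1 / 2) * g x * Real.sqrt (p 0 x)) ^ 2 ∂μ)
      (nhdsWithin 0 (Set.Ioi 0)) (nhds 0)) :
    ∫ x, g x * p 0 x ∂μ = 0 :=
  score_zero_mean_of_dqm_general μ p g hgmeas hnonneg hdens hint hg2 hDQM
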